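/- arXiv:1511.03505 — 2 statements merged into one kernel-verified Lean document; each statement's English description precedes it below -/
import Mathlib

section
/- Let A be the 4×4 real matrix with rows (0,1,0,0), (-1,0,0,0), (0,0,0,-1), (0,0,1,0), and let Λ²A be the induced linear map on the second exterior power Λ²(ℝ⁴). Then the fixed subspace {ω ∈ Λ²(ℝ⁴) : (Λ²A) ω = ω} has dimension 4. -/
/-!
`A` sends the standard basis to `-e₁, e₀, e₃, -e₂`, so `Λ²A` permutes the six `eᵢ ∧ eⱼ` up to
sign: it fixes `e₀∧e₁` and `e₂∧e₃` and exchanges `e₀∧e₂ ↔ -e₁∧e₃`, `e₀∧e₃ ↔ e₁∧e₂`. Hence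
`Λ²(ℝ⁴)` is spanned by four forms fixed by `Λ²A` and two forms negated by it. The eigenspaces
for `1` and `-1` meet trivially, so the fixed subspace is the span of the four fixed forms, and
these are independent because the six forms span the `6`-dimensional space `Λ²(ℝ⁴)`.
-/

theorem Submodule.mem_of_add_mem_of_sub_mem {K V : Type*} [Field K] [NeZero (2 : K)]
    [AddCommGroup V] [Module K V] {p : Submodule K V} {x y : V}
    (hadd : x + y ∈ p) (hsub : x - y ∈ p) : x ∈ p ∧ y ∈ p := by
  have hx : x = (2 : K)⁻¹ • ((x + y) + (x - y)) := by
    rw [add_add_sub_cancel, ← two_smul K x, smul_smul, inv_mul_cancel₀ two_ne_zero, one_smul]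
  have hx_mem : x ∈ p := hx ▸ p.smul_mem _ (p.add_mem hadd hsub)
  exact ⟨hx_mem, by simpa using p.sub_mem hadd hx_mem⟩

namespace Module.End

variable {R M : Type*} [CommRing R] [IsDomain R] [AddCommGroup M] [Module R M]
  [IsTorsionFree R M]

theorem eigenspace_inf_sup_eq_of_le {f : End R M} {a b : R} (hab : a ≠ b)
    {U U' : Submodule R M} (hU : U ≤ f.eigenspace a) (hU' : U' ≤ f.eigenspace b) :
    f.eigenspace a ⊓ (U ⊔ U') = U := by
  have hdisj : Disjoint (f.eigenspace b) (f.eigenspace a) :=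
    f.eigenspaces_iSupIndep.pairwiseDisjoint hab.symm
  rw [inf_comm, sup_inf_assoc_of_le _ hU, (hdisj.mono_left hU').eq_bot, sup_bot_eq]

end Module.End

namespace ExteriorAlgebra

variable {R σ : Type*} [CommRing R] [DecidableEq σ]

theorem ιMulti_two {M : Type*} [AddCommGroup M] [Module R M] (v : Fin 2 → M) :
    ιMulti R 2 v = ι R (v 0) * ι R (v 1) := by
  rw [ιMulti_succ_apply, ιMulti_succ_apply, ιMulti_zero_apply, mul_one]
  rfl

noncomputable def wedgeSingle (i j : σ) : ExteriorAlgebra R (σ → R) :=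
  ι R (Pi.single i 1) * ι R (Pi.single j 1)

theorem wedgeSingle_swap (i j : σ) : wedgeSingle (R := R) j i = -wedgeSingle i j :=
  eq_neg_of_add_eq_zero_left (ι_add_mul_swap _ _)

theorem wedgeSingle_self (i : σ) : wedgeSingle (R := R) i i = 0 :=
  ι_sq_zero _

theorem wedgeSingle_mem_exteriorPower (i j : σ) :
    wedgeSingle (R := R) i j ∈ ⋀[R]^2 (σ → R) := by
  have h := ιMulti_range R 2 ⟨(![Pi.single i 1, Pi.single j 1] : Fin 2 → σ → R), rfl⟩
  rwa [ιMulti_two] at h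

theorem span_range_wedgeSingle [Finite σ] :
    Submodule.span R (Set.range fun p : σ × σ => wedgeSingle (R := R) p.1 p.2) =
      ⋀[R]^2 (σ → R) := by
  rw [← exteriorPower.ιMulti_span_fixedDegree_of_span_eq_top R 2 (σ → R)
    (Pi.basisFun R σ).span_eq]
  congr 1
  ext x
  constructor
  · rintro ⟨⟨i, j⟩, rfl⟩
    refine ⟨![Pi.single i 1, Pi.single j 1], ?_, by rw [ιMulti_two]; rfl⟩
    simp [Set.range_subset_iff, Fin.forall_fin_two]
  · rintro ⟨v, hv, rfl⟩
    simp only [Set.range_subset_iff, Pi.basisFun_apply, Set.mem_range] at hv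
    obtain ⟨i, hi⟩ := hv 0
    obtain ⟨j, hj⟩ := hv 1
    exact ⟨(i, j), by rw [ιMulti_two, ← hi, ← hj]; rfl⟩

theorem map_wedgeSingle_of_apply_single {f : (σ → R) →ₗ[R] (σ → R)} {π : σ → σ} {c : σ → R}
    (hf : ∀ i, f (Pi.single i 1) = c i • Pi.single (π i) 1) (i j : σ) :
    map f (wedgeSingle i j) = (c i * c j) • wedgeSingle (π i) (π j) := by
  simp only [wedgeSingle, map_mul, map_apply_ι, hf, map_smul, smul_mul_smul_comm]

end ExteriorAlgebra

open ExteriorAlgebra Set Submodule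

def complexStructureMatrix : Matrix (Fin 4) (Fin 4) ℝ :=
  !![0,1,0,0; -1,0,0,0; 0,0,0,-1; 0,0,1,0]

theorem toLin'_complexStructureMatrix_single (i : Fin 4) :
    Matrix.toLin' complexStructureMatrix (Pi.single i 1) =
      (![-1, 1, 1, -1] : Fin 4 → ℝ) i • Pi.single (![1, 0, 3, 2] i) 1 := by
  ext k
  fin_cases i <;> fin_cases k <;> simp [complexStructureMatrix]

noncomputable def fixedForm : Fin 4 → ExteriorAlgebra ℝ (Fin 4 → ℝ) :=
  ![wedgeSingle 0 1, wedgeSingle 2 3, wedgeSingle 0 2 - wedgeSingle 1 3,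
    wedgeSingle 0 3 + wedgeSingle 1 2]

noncomputable def antiFixedForm : Fin 2 → ExteriorAlgebra ℝ (Fin 4 → ℝ) :=
  ![wedgeSingle 0 2 + wedgeSingle 1 3, wedgeSingle 0 3 - wedgeSingle 1 2]

theorem map_complexStructureMatrix_fixedForm (k : Fin 4) :
    ExteriorAlgebra.map (Matrix.toLin' complexStructureMatrix) (fixedForm k) = fixedForm k := by
  have hmap := map_wedgeSingle_of_apply_single toLin'_complexStructureMatrix_single
  fin_cases k <;>
    simp [fixedForm, hmap, wedgeSingle_swap (R := ℝ) (0 : Fin 4) 1,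
      wedgeSingle_swap (R := ℝ) (2 : Fin 4) 3, ← sub_eq_add_neg, add_comm]

theorem map_complexStructureMatrix_antiFixedForm (k : Fin 2) :
    ExteriorAlgebra.map (Matrix.toLin' complexStructureMatrix) (antiFixedForm k) =
      -antiFixedForm k := by
  have hmap := map_wedgeSingle_of_apply_single toLin'_complexStructureMatrix_single
  fin_cases k <;> simp [antiFixedForm, hmap]

theorem span_fixedForm_le_eigenspace :
    span ℝ (range fixedForm) ≤ Module.End.eigenspace
      (ExteriorAlgebra.map (Matrix.toLin' complexStructureMatrix)).toLinearMap 1 := by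
  rw [span_le, range_subset_iff]
  intro k
  simp [map_complexStructureMatrix_fixedForm]

theorem span_antiFixedForm_le_eigenspace :
    span ℝ (range antiFixedForm) ≤ Module.End.eigenspace
      (ExteriorAlgebra.map (Matrix.toLin' complexStructureMatrix)).toLinearMap (-1) := by
  rw [span_le, range_subset_iff]
  intro k
  simp [map_complexStructureMatrix_antiFixedForm]

theorem span_fixedForm_sup_span_antiFixedForm :
    span ℝ (range fixedForm) ⊔ span ℝ (range antiFixedForm) = ⋀[ℝ]^2 (Fin 4 → ℝ) := by
  set T := span ℝ (range fixedForm) ⊔ span ℝ (range antiFixedForm)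
  have hu (k) : fixedForm k ∈ T := mem_sup_left (subset_span (mem_range_self k))
  have hw (k) : antiFixedForm k ∈ T := mem_sup_right (subset_span (mem_range_self k))
  refine le_antisymm (sup_le ?_ ?_) ?_
  · rw [span_le, range_subset_iff]
    intro k
    fin_cases k <;> simp [fixedForm, add_mem, sub_mem, wedgeSingle_mem_exteriorPower]
  · rw [span_le, range_subset_iff]
    intro k
    fin_cases k <;> simp [antiFixedForm, add_mem, sub_mem, wedgeSingle_mem_exteriorPower]
  rw [← span_range_wedgeSingle, span_le, range_subset_iff]
  have h01 : wedgeSingle 0 1 ∈ T := hu 0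
  have h23 : wedgeSingle 2 3 ∈ T := hu 1
  obtain ⟨h02, h13⟩ := mem_of_add_mem_of_sub_mem (hw 0) (hu 2)
  obtain ⟨h03, h12⟩ := mem_of_add_mem_of_sub_mem (hu 3) (hw 1)
  have hlt (i j : Fin 4) (hij : i < j) : wedgeSingle i j ∈ T := by
    fin_cases i <;> fin_cases j <;> first | exact absurd hij (by decide) | assumption
  rintro ⟨i, j⟩
  rcases lt_trichotomy i j with h | rfl | h
  · exact hlt i j h
  · simp [wedgeSingle_self]
  · rw [wedgeSingle_swap]
    exact T.neg_mem (hlt j i h)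

theorem linearIndependent_fixedForm : LinearIndependent ℝ fixedForm := by
  have hspan : span ℝ (range (Sum.elim fixedForm antiFixedForm)) = ⋀[ℝ]^2 (Fin 4 → ℝ) := by
    rw [Set.Sum.elim_range, span_union, span_fixedForm_sup_span_antiFixedForm]
  have hind : LinearIndependent ℝ (Sum.elim fixedForm antiFixedForm) := by
    rw [linearIndependent_iff_card_eq_finrank_span, Set.finrank, hspan, exteriorPower.finrank_eq]
    simp [Nat.choose]
  exact hind.comp Sum.inl Sum.inl_injective

/-- The fixed subspace of the induced action of `A` on the second exterior
power `Λ²(ℝ⁴)` has dimension `4`, where `A` is the matrix of `h*` on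
`H¹(T⁴)`. The induced map is the restriction to `⋀[ℝ]^2 (Fin 4 → ℝ)` of the
algebra map `ExteriorAlgebra.map (Matrix.toLin' A)`, which satisfies
`(Λ²A)(v ∧ w) = Av ∧ Aw`. -/
theorem stmt_1 (A : Matrix (Fin 4) (Fin 4) ℝ)
    (hA : A = !![0,1,0,0; -1,0,0,0; 0,0,0,-1; 0,0,1,0]) :
    Module.finrank ℝ
      ↥(Module.End.eigenspace
          ((ExteriorAlgebra.map (Matrix.toLin' A)).toLinearMap) 1
        ⊓ ⋀[ℝ]^2 (Fin 4 → ℝ)) = 4 := by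
  obtain rfl : A = complexStructureMatrix := hA
  rw [← span_fixedForm_sup_span_antiFixedForm,
    Module.End.eigenspace_inf_sup_eq_of_le (by norm_num) span_fixedForm_le_eigenspace
      span_antiFixedForm_le_eigenspace,
    finrank_span_eq_card linearIndependent_fixedForm, Fintype.card_fin]
end

section
/- There do not exist polynomials P′, P″ ∈ ℤ[t] with non-negative coefficients such that P′(t)·P″(t) = 1 + 4t² + t⁴ + t⁷ + 4t⁹ + t¹¹, the coefficient of t⁷ in P′ is at least 1 along with constant coefficient at least 1 (i.e., P′ ≥ 1 + t⁷ coefficientwise), and P″ is either 1 + 4t + 6t² + 4t³ + t⁴ or 1 + 22t² + t⁴. -/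
open Polynomial

/-- There are no polynomials `P′`, `P″` with non-negative coefficients such
that `P′·P″ = 1 + 4t² + t⁴ + t⁷ + 4t⁹ + t¹¹`, `P′ ≥ 1 + t⁷` coefficientwise,
and `P″` is the Poincaré polynomial of `T⁴` or of a K3 surface. -/
theorem stmt_8 :
    ¬ ∃ P' P'' : Polynomial ℤ,
      (∀ n, 0 ≤ P'.coeff n) ∧ (∀ n, 0 ≤ P''.coeff n) ∧
      P' * P'' = 1 + 4 * X ^ 2 + X ^ 4 + X ^ 7 + 4 * X ^ 9 + X ^ 11 ∧
      (∀ n, ((1 : Polynomial ℤ) + X ^ 7).coeff n ≤ P'.coeff n) ∧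
      (P'' = 1 + 4 * X + 6 * X ^ 2 + 4 * X ^ 3 + X ^ 4 ∨
        P'' = 1 + 22 * X ^ 2 + X ^ 4) := by
  rintro ⟨P', P'', h1, h2, hprod, hle, hcase | hcase⟩
  · have ha0 : 1 ≤ P'.coeff 0 := by simpa using hle 0
    have := congrArg (fun p => p.coeff 1) hprod
    subst hcase
    simp [coeff_mul, Finset.Nat.antidiagonal_succ, coeff_one, coeff_X_pow, coeff_X,
      Prod.map, Finset.sum_insert, Finset.mem_insert, Finset.mem_singleton,
      Prod.ext_iff] at this
    have h1' := h1 1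
    linarith
  · have ha0 : 1 ≤ P'.coeff 0 := by simpa using hle 0
    have := congrArg (fun p => p.coeff 2) hprod
    subst hcase
    simp [coeff_mul, Finset.Nat.antidiagonal_succ, coeff_one, coeff_X_pow, coeff_X,
      Prod.map, Finset.sum_insert, Finset.mem_insert, Finset.mem_singleton,
      Prod.ext_iff] at this
    have h2' := h1 2
    linarith
end
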